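/- Let d = (7 − √21)/14. For b ∈ [0, d] define Ŵ₁₀(b) = (1−d)·d/(1−2d)² + (1−d)²·(d−b)/((1−2d−b)²·(1−d−b)) + (1−d)·d/((1−2d−b)·(1−2d)). Then for every b ∈ [0, d], Ŵ₁₀(b) ≤ Ŵ₁₀(0) = 3d(1−d)/(1−2d)² ≤ 1. -/

import Mathlib

/-- The objective function `Ŵ₁₀` of program (P10). -/
noncomputable def W10hat (d b : ℝ) : ℝ :=
  (1 - d) * d / (1 - 2 * d) ^ 2
    + (1 - d) ^ 2 * (d - b) / ((1 - 2 * d - b) ^ 2 * (1 - d - b))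
    + (1 - d) * d / ((1 - 2 * d - b) * (1 - 2 * d))

/-- With `d = (7−√21)/14`, for every `b ∈ [0,d]` we have
`Ŵ₁₀(b) ≤ Ŵ₁₀(0) = 3d(1−d)/(1−2d)² ≤ 1`. -/
theorem W10hat_le (d : ℝ) (hd : d = (7 - Real.sqrt 21) / 14) :
    (∀ b ∈ Set.Icc (0 : ℝ) d, W10hat d b ≤ W10hat d 0) ∧
    W10hat d 0 = 3 * d * (1 - d) / (1 - 2 * d) ^ 2 ∧
    3 * d * (1 - d) / (1 - 2 * d) ^ 2 ≤ 1 := by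
  have hs : Real.sqrt 21 ^ 2 = 21 := Real.sq_sqrt (by norm_num)
  have hslb : 4.58 ≤ Real.sqrt 21 := by nlinarith [Real.sqrt_nonneg 21, hs]
  have hsub : Real.sqrt 21 ≤ 4.59 := by nlinarith [Real.sqrt_nonneg 21, hs]
  have hd2 : d ^ 2 = d - 1 / 7 := by rw [hd]; nlinarith [hs]
  have hlb : (0.17 : ℝ) ≤ d := by rw [hd]; nlinarith
  have hub : d ≤ (0.173 : ℝ) := by rw [hd]; nlinarith
  have h3 : (0 : ℝ) < 1 - 2 * d := by nlinarith
  have h1d : (0 : ℝ) < 1 - d := by nlinarith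
  have e1 : (1 - 2 * d) ^ 2 = 3 / 7 := by linear_combination 4 * hd2
  have hW0 : W10hat d 0 = 3 * d * (1 - d) / (1 - 2 * d) ^ 2 := by
    rw [W10hat]
    have h3' := h3.ne'
    have h1d' := h1d.ne'
    field_simp
    ring
  have hone : 3 * d * (1 - d) / (1 - 2 * d) ^ 2 = 1 := by
    rw [e1, show 3 * d * (1 - d) = 3 / 7 by linear_combination (-3 : ℝ) * hd2]
    norm_num
  refine ⟨?_, hW0, le_of_eq hone⟩
  intro b hb
  obtain ⟨hb0, hbd⟩ := hb
  rw [hW0, hone]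
  have h1 : (0:ℝ) < 1 - 2 * d - b := by nlinarith
  have h2 : (0:ℝ) < 1 - d - b := by nlinarith
  rw [W10hat, div_add_div _ _ (by positivity) (by positivity),
    div_add_div _ _ (by positivity) (by positivity), div_le_one (by positivity)]
  have h4 : (0:ℝ) ≤ 5 - 8 * d - 2 * b := by nlinarith
  have key : (1 - 2 * d) ^ 2 * ((1 - 2 * d - b) ^ 2 * (1 - d - b)) *
        ((1 - 2 * d - b) * (1 - 2 * d)) -
      (((1 - d) * d * ((1 - 2 * d - b) ^ 2 * (1 - d - b)) +
          (1 - 2 * d) ^ 2 * ((1 - d) ^ 2 * (d - b))) * ((1 - 2 * d - b) * (1 - 2 * d)) +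
        (1 - 2 * d) ^ 2 * ((1 - 2 * d - b) ^ 2 * (1 - d - b)) * ((1 - d) * d)) =
      b ^ 2 * (5 - 8 * d - 2 * b) * ((1 - 2 * d - b) * (1 - 2 * d)) / 7 := by
    linear_combination ((7 - 14 * b + 16 * b ^ 2 - 5 * b ^ 3 - 35 * d + 49 * d * b -
      27 * d * b ^ 2 + 56 * d ^ 2 - 42 * d ^ 2 * b - 28 * d ^ 3) *
      ((1 - 2 * d - b) * (1 - 2 * d))) * hd2
  nlinarith [mul_nonneg (mul_nonneg (sq_nonneg b) h4) (le_of_lt (mul_pos h1 h3)), key]
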